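/- arXiv:0903.4839 — 6 statements merged into one kernel-verified Lean document; each statement's English description precedes it below -/
import Mathlib

section
/- Let K be a field, A = K[x₁,…,xₙ], and φ, ψ K-algebra endomorphisms of A. Then: (1) the φ-equivalence and ψ-equivalence relations coincide, i.e. for all K-algebra endomorphisms φ₁, φ₂ of A one has φ∘φ₁ = φ∘φ₂ if and only if ψ∘φ₁ = ψ∘φ₂, exactly when ker φ = ker ψ; (2) for all K-algebra endomorphisms φ₁, φ₂ of A the implication (φ∘φ₁ = φ∘φ₂ ⟹ ψ∘φ₁ = ψ∘φ₂) holds exactly when ker φ ⊆ ker ψ. Here ker denotes the ring-theoretic kernel, so ker φ ⊆ ker ψ means that every polynomial H with H(φ(x₁),…,φ(xₙ)) = 0 also satisfies H(ψ(x₁),…,ψ(xₙ)) = 0. -/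
open MvPolynomial

theorem key_aux {K : Type} [Field K] {n : ℕ}
    (φ ψ : MvPolynomial (Fin n) K →ₐ[K] MvPolynomial (Fin n) K) :
    (∀ φ₁ φ₂ : MvPolynomial (Fin n) K →ₐ[K] MvPolynomial (Fin n) K,
        φ.comp φ₁ = φ.comp φ₂ → ψ.comp φ₁ = ψ.comp φ₂) ↔
      RingHom.ker φ ≤ RingHom.ker ψ := by
  constructor
  · intro h H hH
    rw [RingHom.mem_ker] at hH ⊢
    cases n with
    | zero =>
      obtain ⟨c, rfl⟩ := MvPolynomial.C_surjective (Fin 0) H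
      have hc : φ (C c) = C c := by
        simpa only [MvPolynomial.algebraMap_eq] using φ.commutes c
      rw [hc] at hH
      simp [hH]
    | succ m =>
      set α : MvPolynomial (Fin (m+1)) K →ₐ[K] MvPolynomial (Fin (m+1)) K :=
        aeval (fun i : Fin (m+1) => X i + if i = 0 then H else 0) with hα
      have hcomp : φ.comp α = φ.comp (AlgHom.id K _) := by
        apply MvPolynomial.algHom_ext
        intro i
        by_cases hi : i = 0 <;> simp [hα, hi, hH]
      have := AlgHom.congr_fun (h _ _ hcomp) (X 0)
      simp [hα] at this
      linear_combination this
  · intro h φ₁ φ₂ heq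
    apply AlgHom.ext
    intro p
    have h1 : φ (φ₁ p) = φ (φ₂ p) := AlgHom.congr_fun heq p
    have h2 : φ₁ p - φ₂ p ∈ RingHom.ker φ := by
      rw [RingHom.mem_ker, map_sub, sub_eq_zero]; exact h1
    have h3 := h h2
    rw [RingHom.mem_ker, map_sub, sub_eq_zero] at h3
    exact h3

/-- φ-equivalence coincides with ψ-equivalence iff `ker φ = ker ψ`, and the implication
`φ∘φ₁ = φ∘φ₂ ⟹ ψ∘φ₁ = ψ∘φ₂` holds for all `φ₁, φ₂` iff `ker φ ⊆ ker ψ`. -/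
theorem stmt_1 (K : Type) [Field K] (n : ℕ)
    (φ ψ : MvPolynomial (Fin n) K →ₐ[K] MvPolynomial (Fin n) K) :
    ((∀ φ₁ φ₂ : MvPolynomial (Fin n) K →ₐ[K] MvPolynomial (Fin n) K,
        φ.comp φ₁ = φ.comp φ₂ ↔ ψ.comp φ₁ = ψ.comp φ₂) ↔
      RingHom.ker φ = RingHom.ker ψ) ∧
    ((∀ φ₁ φ₂ : MvPolynomial (Fin n) K →ₐ[K] MvPolynomial (Fin n) K,
        φ.comp φ₁ = φ.comp φ₂ → ψ.comp φ₁ = ψ.comp φ₂) ↔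
      RingHom.ker φ ≤ RingHom.ker ψ) := by
  constructor
  · constructor
    · intro h
      apply le_antisymm
      · exact (key_aux φ ψ).1 fun a b hab => (h a b).1 hab
      · exact (key_aux ψ φ).1 fun a b hab => (h a b).2 hab
    · intro h a b
      constructor
      · exact fun hab => (key_aux φ ψ).2 h.le a b hab
      · exact fun hab => (key_aux ψ φ).2 h.ge a b hab
  · exact key_aux φ ψ
end

section
/- Let K be a field, A = K[x₁,…,xₙ], and φ, ψ K-algebra endomorphisms of A. If ker ψ ⊆ ker φ, then trdeg_K(image φ) ≤ trdeg_K(image ψ), where image denotes the range subalgebra and trdeg the transcendence degree over K. Moreover, if the inclusion ker ψ ⊊ ker φ is proper, then the inequality is strict: trdeg_K(image φ) < trdeg_K(image ψ). -/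
/-!
As `φ.range ≃ A ⧸ ker φ`, everything happens along the surjection `A ⧸ ker ψ → A ⧸ ker φ`, and a
surjection cannot increase the transcendence degree. For strictness, lift a finite transcendence
basis of `A ⧸ ker φ` to `A ⧸ ker ψ` and add the class `b` of some `f ∈ ker φ \ ker ψ`. In the domain
`A ⧸ ker ψ` an algebraic relation for `b` over the lifted basis can be taken with nonzero constant
term; mapping it to `A ⧸ ker φ`, where `b` becomes `0`, leaves a nontrivial relation among the basis
elements. So the enlarged family is algebraically independent, one element longer than a basis.
-/

open MvPolynomial

/-- The transcendence degree of an algebra `A` over `K`: the supremum of cardinalities of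
algebraically independent subsets (mirrors Mathlib's `Algebra.trdeg`). -/
noncomputable def algTrdeg (K A : Type*) [CommRing K] [CommRing A] [Algebra K A] : Cardinal :=
  ⨆ ι : { s : Set A // AlgebraicIndependent K ((↑) : s → A) }, Cardinal.mk ι.1

open Algebra Cardinal

universe u

theorem algTrdeg_eq_trdeg (K A : Type*) [CommRing K] [CommRing A] [Algebra K A] :
    algTrdeg K A = trdeg K A := rfl

theorem AlgHom.transcendental_adjoin_of_map_eq_zero {R B C ι : Type*} [CommRing R] [CommRing B]
    [CommRing C] [Algebra R B] [Algebra R C] (θ : B →ₐ[R] C) {x : ι → B}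
    (hx : AlgebraicIndependent R (θ ∘ x)) {b : B} (hb : b ∈ nonZeroDivisors B) (hθb : θ b = 0) :
    Transcendental (adjoin R (Set.range x)) b := by
  intro hbalg
  obtain ⟨r, hr0, hbr⟩ := hbalg.exists_nonzero_dvd hb
  obtain ⟨p, hp⟩ : ∃ p : MvPolynomial ι R, aeval x p = r :=
    (adjoin_range_eq_range_aeval R x ▸ r.2 : (r : B) ∈ (aeval x).range)
  have hθr : θ (r : B) = 0 := by simpa [hθb] using map_dvd θ hbr
  have hp0 : p = 0 := by
    apply _root_.algebraicIndependent_iff.mp hx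
    rw [← hp, comp_aeval_apply] at hθr
    exact hθr
  exact hr0 (Subtype.ext (by simp [← hp, hp0]))

theorem Algebra.trdeg_lt_of_surjective_of_map_eq_zero {R : Type*} {B C : Type u} [CommRing R]
    [Nontrivial R] [CommRing B] [CommRing C] [NoZeroDivisors C] [Algebra R B] [Algebra R C]
    [FaithfulSMul R C] (θ : B →ₐ[R] C) (hθ : Function.Surjective θ) {b : B}
    (hb : b ∈ nonZeroDivisors B) (hθb : θ b = 0) (hC : trdeg R C < ℵ₀) :
    trdeg R C < trdeg R B := by
  obtain ⟨s, hs⟩ := exists_isTranscendenceBasis R C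
  set x : s → B := Function.surjInv hθ ∘ (↑)
  have hθx : θ ∘ x = (↑) := funext fun i => Function.surjInv_eq hθ i
  have hind : AlgebraicIndependent R (fun o : Option s => o.elim b x) :=
    AlgebraicIndependent.option_iff.mpr
      ⟨AlgebraicIndependent.of_comp θ (hθx ▸ hs.1),
        θ.transcendental_adjoin_of_map_eq_zero (hθx ▸ hs.1) hb hθb⟩
  rw [← hs.cardinalMk_eq_trdeg] at hC ⊢
  calc #s < #s + 1 := by
        obtain ⟨k, hk⟩ := lt_aleph0.mp hC
        rw [hk]
        exact_mod_cast k.lt_succ_self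
    _ = #(Option s) := mk_option.symm
    _ ≤ trdeg R B := hind.cardinalMk_le_trdeg

theorem Ideal.trdeg_quotient_lt_of_lt {K A : Type*} [Field K] [CommRing A] [Algebra K A]
    [Algebra.FiniteType K A] {P Q : Ideal A} [P.IsPrime] [Q.IsPrime] (hPQ : P < Q) :
    trdeg K (A ⧸ Q) < trdeg K (A ⧸ P) := by
  obtain ⟨f, hfQ, hfP⟩ := SetLike.exists_of_lt hPQ
  exact trdeg_lt_of_surjective_of_map_eq_zero (Quotient.factorₐ K hPQ.le)
    (Quotient.factor_surjective hPQ.le)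
    (mem_nonZeroDivisors_of_ne_zero (Quotient.eq_zero_iff_mem.not.mpr hfP))
    (Quotient.eq_zero_iff_mem.mpr hfQ) trdeg_lt_aleph0_of_finiteType

/-- If `ker ψ ⊆ ker φ` then `trdeg (image φ) ≤ trdeg (image ψ)`, with strict inequality
when the inclusion of kernels is proper. -/
theorem stmt_2 (K : Type) [Field K] (n : ℕ)
    (φ ψ : MvPolynomial (Fin n) K →ₐ[K] MvPolynomial (Fin n) K)
    (h : RingHom.ker ψ ≤ RingHom.ker φ) :
    algTrdeg K ↥φ.range ≤ algTrdeg K ↥ψ.range ∧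
    (RingHom.ker ψ < RingHom.ker φ → algTrdeg K ↥φ.range < algTrdeg K ↥ψ.range) := by
  simp only [algTrdeg_eq_trdeg, ← (Ideal.quotientKerEquivRange φ).trdeg_eq,
    ← (Ideal.quotientKerEquivRange ψ).trdeg_eq]
  have := RingHom.ker_isPrime φ
  have := RingHom.ker_isPrime ψ
  exact ⟨trdeg_le_of_surjective (Ideal.Quotient.factorₐ K h) (Ideal.Quotient.factor_surjective h),
    Ideal.trdeg_quotient_lt_of_lt⟩
end

section
/- Let K be a finite field, m ≥ 1, n ≥ m + 1, and Q₁,…,Q_n ∈ K[x₀,…,x_m] polynomials in m + 1 variables such that the subalgebra K[Q₁,…,Q_n] has transcendence degree m + 1 over K. For r ∈ ℕ let τ_r : K[x₀,…,x_m] → K[x₀,…,x_{m−1}] be the K-algebra homomorphism fixing x₀,…,x_{m−1} and sending x_m to x₀^r. Then there exists r₀ ∈ ℕ such that for all r ≥ r₀, the subalgebra K[τ_r(Q₁),…,τ_r(Q_n)] has transcendence degree m over K. -/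
open MvPolynomial

/-- The transcendence degree of a subalgebra `S` over `K`. -/
noncomputable def subTrdeg (K A : Type*) [CommRing K] [CommRing A] [Algebra K A]
    (S : Subalgebra K A) : Cardinal :=
  algTrdeg K ↥S

/-- The substitution `x_m ↦ x₀^r` from `K[x₀,…,x_m]` into `K[x₀,…,x_{m-1}]`
(requires `m ≥ 1`). -/
noncomputable def substPow (K : Type) [Field K] (m : ℕ) (hm : 1 ≤ m) (r : ℕ) :
    MvPolynomial (Fin (m + 1)) K →ₐ[K] MvPolynomial (Fin m) K :=
  MvPolynomial.aeval fun j : Fin (m + 1) =>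
    if h : (j : ℕ) < m then MvPolynomial.X (⟨j, h⟩ : Fin m)
    else (MvPolynomial.X (⟨0, hm⟩ : Fin m)) ^ r

/-! Because `K[Q₁,…,Qₙ]` has the full transcendence degree `m + 1`, every variable `xᵢ` is
algebraic over it. Push a nonzero polynomial annihilating `xᵢ` (`i < m`) through `τ_r`: its
leading coefficient survives as soon as `r` exceeds that coefficient's total degree, because
`τ_r` is injective on monomials `x^α` with `α₀ < r` (the exponent `α₀ + r α_m` of `x₀`
determines `α₀` and `α_m`). Then `x₀,…,x_{m-1}` are algebraic over `K[τ_r(Q₁),…,τ_r(Qₙ)]`,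
which therefore has the transcendence degree `m` of `K[x₀,…,x_{m-1}]`. -/

section Transcendence

open Cardinal

theorem subTrdeg_eq_trdeg (K A : Type*) [CommRing K] [CommRing A] [Algebra K A]
    (S : Subalgebra K A) : subTrdeg K A S = Algebra.trdeg K S :=
  rfl

variable {K A : Type} [Field K] [CommRing A] [IsDomain A] [Algebra K A] (C : Subalgebra K A)

theorem Subalgebra.trdeg_eq_of_isAlgebraic [Algebra.IsAlgebraic C A] :
    Algebra.trdeg K C = Algebra.trdeg K A := by
  rw [← trdeg_add_eq K C (A := A), (trdeg_eq_zero_iff (R := C) (A := A)).2 ‹_›, add_zero]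

theorem Subalgebra.isAlgebraic_of_trdeg_eq (h : Algebra.trdeg K C = Algebra.trdeg K A)
    (hfin : Algebra.trdeg K A < ℵ₀) : Algebra.IsAlgebraic C A := by
  have hsum := trdeg_add_eq K C (A := A)
  rw [h, add_eq_left_iff] at hsum
  refine trdeg_eq_zero_iff.1 (hsum.resolve_left fun hle => ?_)
  exact (le_max_left _ _ |>.trans hle).not_gt hfin

end Transcendence

theorem isAlgebraic_subalgebraMap_of_aeval_eq_zero {R A B : Type*} [CommRing R] [CommRing A]
    [CommRing B] [Algebra R A] [Algebra R B] (φ : A →ₐ[R] B) {C : Subalgebra R A}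
    {p : Polynomial C} {x : A} (hpx : Polynomial.aeval x p = 0) (hlead : φ p.leadingCoeff ≠ 0) :
    IsAlgebraic (C.map φ) (φ x) := by
  let ψ : C →ₐ[R] C.map φ :=
    (φ.comp C.val).codRestrict _ fun c => Subalgebra.mem_map.2 ⟨c, c.2, rfl⟩
  refine ⟨p.map ψ, fun h0 => hlead ?_, ?_⟩
  · have := congrArg (fun q => (q.coeff p.natDegree : B)) h0
    simp only [Polynomial.coeff_map, Polynomial.coeff_zero] at this
    exact this
  · have := Polynomial.map_aeval_eq_aeval_map (φ := (ψ : C →+* C.map φ)) (ψ := (φ : A →+* B))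
      (RingHom.ext fun _ => rfl) p x
    rw [hpx, map_zero] at this
    exact this.symm

theorem MvPolynomial.isAlgebraic_of_forall_isAlgebraic_X {σ K : Type} [Field K]
    (C : Subalgebra K (MvPolynomial σ K)) (h : ∀ i, IsAlgebraic C (X i : MvPolynomial σ K)) :
    Algebra.IsAlgebraic C (MvPolynomial σ K) := by
  have htop : Algebra.adjoin C (Set.range (X : σ → MvPolynomial σ K)) = ⊤ := by
    rw [← Algebra.adjoin_adjoin_of_tower K, adjoin_range_X, Algebra.coe_top, Algebra.adjoin_univ]
  rw [Algebra.isAlgebraic_iff, ← htop]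
  exact Algebra.isAlgebraic_adjoin_iff.2 (Set.forall_mem_range.2 h)


section Substitution

variable {K : Type} [Field K] {m : ℕ} (hm : 1 ≤ m) (r : ℕ)

noncomputable def substPowExponent (α : Fin (m + 1) →₀ ℕ) : Fin m →₀ ℕ :=
  Finsupp.equivFunOnFinite.symm fun j =>
    α j.castSucc + if j = ⟨0, hm⟩ then r * α (Fin.last m) else 0

theorem substPowExponent_apply (α : Fin (m + 1) →₀ ℕ) (j : Fin m) :
    substPowExponent hm r α j = α j.castSucc + if j = ⟨0, hm⟩ then r * α (Fin.last m) else 0 :=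
  rfl

theorem substPow_X_castSucc (i : Fin m) : substPow K m hm r (X i.castSucc) = X i := by
  simp [substPow]

theorem substPow_monomial (α : Fin (m + 1) →₀ ℕ) (c : K) :
    substPow K m hm r (monomial α c) = monomial (substPowExponent hm r α) c := by
  classical
  rw [substPow, aeval_monomial, monomial_eq, Finsupp.prod_fintype _ _ (fun _ => pow_zero _),
    Finsupp.prod_fintype _ _ (fun _ => pow_zero _), Fin.prod_univ_castSucc]
  simp only [substPowExponent_apply, pow_add, pow_ite, pow_zero]
  rw [Finset.prod_mul_distrib, Finset.prod_ite_eq']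
  simp [pow_mul]

theorem substPowExponent_injOn :
    Set.InjOn (substPowExponent hm r) {α | α 0 < r} := by
  intro α hα β hβ h
  have hcoord (j : Fin m) := DFunLike.congr_fun h j
  simp only [substPowExponent_apply] at hcoord
  have h0 : α 0 + r * α (Fin.last m) = β 0 + r * β (Fin.last m) := by
    simpa using hcoord ⟨0, hm⟩
  have hr : 0 < r := by simp at hα; omega
  have hlast : α (Fin.last m) = β (Fin.last m) := by
    have := congrArg (· / r) h0
    simpa [Nat.add_mul_div_left _ _ hr, Nat.div_eq_of_lt hα, Nat.div_eq_of_lt hβ] using this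
  ext i
  induction i using Fin.lastCases with
  | last => exact hlast
  | cast j =>
    have := hcoord j
    split_ifs at this with hj
    · subst hj; simp only [hlast] at this; omega
    · omega

theorem substPow_ne_zero {f : MvPolynomial (Fin (m + 1)) K} (hf : f ≠ 0)
    (hr : f.totalDegree < r) : substPow K m hm r f ≠ 0 := by
  classical
  have hsupp : (f.support : Set (Fin (m + 1) →₀ ℕ)) ⊆ {α | α 0 < r} := fun α hα =>
    lt_of_le_of_lt ((Finsupp.le_degree 0 α).trans (le_totalDegree hα)) hr
  obtain ⟨α, hα⟩ := support_nonempty.2 hf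
  have hcoeff : coeff (substPowExponent hm r α) (substPow K m hm r f) = coeff α f := by
    conv_lhs => rw [f.as_sum, map_sum, coeff_sum]
    rw [Finset.sum_eq_single α]
    · simp [substPow_monomial]
    · intro β hβ hne
      rw [substPow_monomial, coeff_monomial,
        if_neg fun h => hne (substPowExponent_injOn hm r (hsupp hβ) (hsupp hα) h)]
    · exact fun h => absurd hα h
  intro h0
  rw [h0, coeff_zero] at hcoeff
  exact mem_support_iff.1 hα hcoeff.symm

end Substitution

theorem stmt_8_general (K : Type) [Field K] (m n : ℕ) (hm : 1 ≤ m)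
    (Q : Fin n → MvPolynomial (Fin (m + 1)) K)
    (hQ : subTrdeg K _ (Algebra.adjoin K (Set.range Q)) = ((m + 1 : ℕ) : Cardinal)) :
    ∃ r₀ : ℕ, ∀ r : ℕ, r₀ ≤ r →
      subTrdeg K _ (Algebra.adjoin K (Set.range fun i => substPow K m hm r (Q i))) =
        (m : Cardinal) := by
  set S := Algebra.adjoin K (Set.range Q)
  rw [subTrdeg_eq_trdeg] at hQ
  have : Algebra.IsAlgebraic S (MvPolynomial (Fin (m + 1)) K) :=
    S.isAlgebraic_of_trdeg_eq (by simpa using hQ)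
      (by simpa using Cardinal.natCast_lt_aleph0 (n := m + 1))
  choose p hp hpx using fun i : Fin m => Algebra.IsAlgebraic.isAlgebraic (R := S)
    (X i.castSucc : MvPolynomial (Fin (m + 1)) K)
  set d := fun i => ((p i).leadingCoeff : MvPolynomial (Fin (m + 1)) K).totalDegree
  refine ⟨Finset.univ.sup d + 1, fun r hr => ?_⟩
  have hmap : S.map (substPow K m hm r) =
      Algebra.adjoin K (Set.range fun i => substPow K m hm r (Q i)) := by
    rw [AlgHom.map_adjoin, ← Set.range_comp]
    rfl
  have : Algebra.IsAlgebraic (S.map (substPow K m hm r)) (MvPolynomial (Fin m) K) := by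
    refine isAlgebraic_of_forall_isAlgebraic_X _ fun i => ?_
    rw [← substPow_X_castSucc hm r]
    refine isAlgebraic_subalgebraMap_of_aeval_eq_zero _ (hpx i) (substPow_ne_zero hm r ?_ ?_)
    · simpa using hp i
    · exact (Finset.le_sup (f := d) (Finset.mem_univ i)).trans_lt hr
  rw [← hmap, subTrdeg_eq_trdeg, Subalgebra.trdeg_eq_of_isAlgebraic]
  simp

/-- Over a finite field `K`: if the subalgebra `K[Q₁,…,Qₙ]` of `K[x₀,…,x_m]` has
transcendence degree `m + 1`, then for all sufficiently large `r` the subalgebra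
`K[τ_r(Q₁),…,τ_r(Qₙ)]`, obtained by substituting `x₀^r` for `x_m`, has transcendence
degree `m`. -/
theorem stmt_8 (K : Type) [Field K] [Finite K] (m n : ℕ) (hm : 1 ≤ m) (hn : m + 1 ≤ n)
    (Q : Fin n → MvPolynomial (Fin (m + 1)) K)
    (hQ : subTrdeg K _ (Algebra.adjoin K (Set.range Q)) = ((m + 1 : ℕ) : Cardinal)) :
    ∃ r₀ : ℕ, ∀ r : ℕ, r₀ ≤ r →
      subTrdeg K _ (Algebra.adjoin K (Set.range fun i => substPow K m hm r (Q i))) =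
        (m : Cardinal) :=
  stmt_8_general K m n hm Q hQ
end

section
/- Let K be a field, A = K[x₁,…,xₙ], and suppose θ and e_{ij} (1 ≤ i,j ≤ n) are K-algebra endomorphisms of A satisfying: θ∘θ = θ; θ∘e_{ij} = e_{ij}∘θ = θ for all i,j; e_{ij}∘e_{km} = e_{im} whenever j = k and e_{ij}∘e_{km} = θ whenever j ≠ k (i.e., the assignment b_{ij} ↦ e_{ij}, 0 ↦ θ is a representation of the Kronecker semigroup Γₙ in End A). If the representation is singular, i.e. trdeg_K(image e_{ij}) = 0 for all i,j, then e_{ij} = θ for all i,j, and trdeg_K(image θ) = 0. -/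
open MvPolynomial

/-!
An element of `K[x₁,…,xₙ]` that is algebraic over `K` is a constant: if it is nonzero it is
integral over the field `K` inside a domain, hence a unit, and units of a polynomial ring over a
field are constants. So a rank-`0` endomorphism has constant values, and `θ ∘ e = θ` forces a
constant-valued `e` to agree with `θ`, since `θ` fixes constants. For `n > 0` this makes `θ`
itself one of the `e i j`; for `n = 0` every polynomial is a constant.
-/

theorem algTrdeg_eq_zero_iff {K A : Type*} [CommRing K] [CommRing A] [Algebra K A] :
    algTrdeg K A = 0 ↔ Algebra.IsAlgebraic K A :=
  trdeg_eq_zero_iff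

namespace MvPolynomial

variable {K σ : Type*} [Field K]

theorem exists_eq_C_of_isAlgebraic {p : MvPolynomial σ K} (hp : IsAlgebraic K p) :
    ∃ c, p = C c := by
  rcases eq_or_ne p 0 with rfl | hp0
  · exact ⟨0, C_0.symm⟩
  obtain ⟨c, -, rfl⟩ := isUnit_iff_eq_C_of_isReduced.mp (hp.isIntegral.isUnit hp0)
  exact ⟨c, rfl⟩

theorem algTrdeg_range_eq_zero_iff {R : Type*} [CommRing R] [Algebra K R]
    (f : R →ₐ[K] MvPolynomial σ K) :
    algTrdeg K f.range = 0 ↔ ∀ p, ∃ c, f p = C c := by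
  rw [algTrdeg_eq_zero_iff, Algebra.isAlgebraic_def]
  constructor
  · intro h p
    exact exists_eq_C_of_isAlgebraic
      (Subalgebra.isAlgebraic_iff_isAlgebraic_val.mp (h ⟨f p, f.mem_range_self p⟩))
  · rintro h ⟨_, hx⟩
    obtain ⟨p, rfl⟩ := f.mem_range.mp hx
    obtain ⟨c, hc⟩ := h p
    refine Subalgebra.isAlgebraic_iff_isAlgebraic_val.mpr ?_
    rw [Subtype.coe_mk, hc, ← algebraMap_eq]
    exact isAlgebraic_algebraMap c

end MvPolynomial

theorem AlgHom.eq_of_comp_eq_of_forall_eq_C {K σ : Type*} [Field K]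
    {θ f : MvPolynomial σ K →ₐ[K] MvPolynomial σ K} (hθf : θ.comp f = θ)
    (hf : ∀ p, ∃ c, f p = C c) : f = θ := by
  refine AlgHom.ext fun p => ?_
  obtain ⟨c, hc⟩ := hf p
  calc f p = θ (C c) := by rw [hc, ← algebraMap_eq, θ.commutes]
    _ = θ p := by rw [← hc, ← AlgHom.comp_apply, hθf]

theorem stmt_10_general (K : Type) [Field K] (n : ℕ)
    (θ : MvPolynomial (Fin n) K →ₐ[K] MvPolynomial (Fin n) K)
    (e : Fin n → Fin n → (MvPolynomial (Fin n) K →ₐ[K] MvPolynomial (Fin n) K))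
    (hθe : ∀ i j, θ.comp (e i j) = θ ∧ (e i j).comp θ = θ)
    (hsing : ∀ i j, algTrdeg K ↥(e i j).range = 0) :
    (∀ i j, e i j = θ) ∧ algTrdeg K ↥θ.range = 0 := by
  have hconst i j := (algTrdeg_range_eq_zero_iff (e i j)).mp (hsing i j)
  have he i j : e i j = θ := AlgHom.eq_of_comp_eq_of_forall_eq_C (hθe i j).1 (hconst i j)
  refine ⟨he, (algTrdeg_range_eq_zero_iff θ).mpr ?_⟩
  cases n with
  | zero =>
    intro p
    obtain ⟨c, hc⟩ := C_surjective (Fin 0) (θ p)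
    exact ⟨c, hc.symm⟩
  | succ n => simpa only [he 0 0] using hconst 0 0

/-- A singular representation of the Kronecker semigroup `Γₙ` in `End K[x₁,…,xₙ]`
(all `e_{ij}` of rank `0`) collapses: all `e_{ij}` equal the image `θ` of the zero
element, and `θ` has rank `0`. -/
theorem stmt_10 (K : Type) [Field K] (n : ℕ)
    (θ : MvPolynomial (Fin n) K →ₐ[K] MvPolynomial (Fin n) K)
    (e : Fin n → Fin n → (MvPolynomial (Fin n) K →ₐ[K] MvPolynomial (Fin n) K))
    (hθθ : θ.comp θ = θ)
    (hθe : ∀ i j, θ.comp (e i j) = θ ∧ (e i j).comp θ = θ)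
    (hee : ∀ i j k l, (e i j).comp (e k l) = if j = k then e i l else θ)
    (hsing : ∀ i j, algTrdeg K ↥(e i j).range = 0) :
    (∀ i j, e i j = θ) ∧ algTrdeg K ↥θ.range = 0 :=
  stmt_10_general K n θ e hθe hsing
end

section
/- Let K be a field, n ≥ 2, A = K[x₁,…,xₙ], and let e'_{ij} (1 ≤ i,j ≤ n) be a base collection of endomorphisms of A: a subbase of End A for which there exist z₁,…,zₙ ∈ A forming a base of A with image(e'_{ii}) ⊆ K[z_i] for every i. Then there exists a base z'₁,…,z'ₙ of A in which the e'_{ij} are exactly the Kronecker endomorphisms: e'_{ij}(z'_k) = z'_i if k = j and e'_{ij}(z'_k) = 0 if k ≠ j, for all i, j, k. -/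
open MvPolynomial

/-- The `K`-algebra endomorphism `Ô` of `K[x₁,…,xₙ]` sending every variable to `0`. -/
noncomputable def zeroEnd (K : Type) [Field K] (n : ℕ) :
    MvPolynomial (Fin n) K →ₐ[K] MvPolynomial (Fin n) K :=
  MvPolynomial.aeval fun _ : Fin n => (0 : MvPolynomial (Fin n) K)

/-!
Since `z₁, …, zₙ` is a base, each `zᵢ` is transcendental, so an endomorphism is pinned down on
`K[zᵢ]` by a polynomial, and composition of endomorphisms becomes composition of polynomials.
Idempotency of `e'₁₁` forces `e'₁₁(z₁) = q(z₁)` with `q ∘ q = q`; `q` is not constant, for then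
`e'₁₁ = e'₂₂ ∘ e'₁₁ = Ô`, so `q = X`. Next `e'ₖ₁(z₁) = h(zₖ)` and `e'₁ₖ(zₖ) = g(z₁)` with
`h ∘ g = X` because `e'₁ₖ ∘ e'ₖ₁ = e'₁₁` fixes `z₁`; hence `h` is affine and the elements
`z'ₖ = e'ₖ₁(z₁ - c)`, with `c` the constant term of `z₁`, are an affine change of the base `z`.
The Kronecker relations then follow from `e'ᵢⱼ ∘ e'ₖ₁ = if j = k then e'ᵢ₁ else Ô` and
`Ô(z₁ - c) = 0`.
-/

namespace Polynomial

variable {R : Type*} [CommRing R] [IsDomain R] {p q : R[X]}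

theorem natDegree_eq_one_of_comp_eq_X (h : p.comp q = X) : p.natDegree = 1 := by
  have hdeg := congrArg natDegree h
  rw [natDegree_comp, natDegree_X] at hdeg
  exact Nat.eq_one_of_mul_eq_one_right hdeg

theorem eq_X_of_comp_self_eq_self (hq : q.comp q = q) (hd : q.natDegree ≠ 0) : q = X := by
  have hd1 : q.natDegree = 1 := by
    have hdeg := congrArg natDegree hq
    rw [natDegree_comp] at hdeg
    exact (Nat.mul_eq_left hd).1 hdeg
  have hlin := eq_X_add_C_of_natDegree_le_one hd1.le
  have ha : q.coeff 1 ≠ 0 := by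
    rw [← hd1]
    exact leadingCoeff_ne_zero.2 (ne_zero_of_natDegree_gt (n := 0) (by omega))
  set a := q.coeff 1
  set b := q.coeff 0
  have hcomp : C a * q + C b = q := by
    conv_rhs => rw [← hq]
    conv_lhs => rw [hlin]
    rw [hlin]
    simp [add_comp, mul_comp]
  have ha1 : a = 1 := by
    have h1 := congrArg (coeff · 1) hcomp
    simp only [coeff_add, coeff_C_mul, coeff_C_succ, add_zero] at h1
    exact mul_left_cancel₀ ha (h1.trans (mul_one a).symm)
  have hb0 : b = 0 := by
    have h0 := congrArg (coeff · 0) hcomp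
    simpa [ha1] using h0
  rw [hlin, ha1, hb0]
  simp

end Polynomial

namespace AlgHom

theorem comp_eq_self_of_range_le_bot {K A B : Type*} [CommSemiring K] [Semiring A] [Algebra K A]
    [Semiring B] [Algebra K B] (ψ : A →ₐ[K] A) {φ : B →ₐ[K] A} (h : φ.range ≤ ⊥) :
    ψ.comp φ = φ := by
  ext f
  obtain ⟨c, hc⟩ := Algebra.mem_bot.1 (h (φ.mem_range_self f))
  rw [comp_apply, ← hc, AlgHom.commutes]

variable {K A : Type*} [CommRing K] [IsDomain K] [CommRing A] [Algebra K A] {x y : A}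

theorem apply_eq_self_or_range_le_bot {φ : A →ₐ[K] A} (hx : Transcendental K x)
    (hφ : φ.comp φ = φ) (hr : φ.range ≤ Algebra.adjoin K {x}) : φ x = x ∨ φ.range ≤ ⊥ := by
  have hmem (f : A) : ∃ p : Polynomial K, Polynomial.aeval x p = φ f := by
    simpa [Algebra.adjoin_singleton_eq_range_aeval] using hr (φ.mem_range_self f)
  have hidem (f : A) : φ (φ f) = φ f := congr($hφ f)
  obtain ⟨q, hq⟩ := hmem x
  have hqq : q.comp q = q := transcendental_iff_injective.1 hx <| by
    rw [Polynomial.aeval_comp, hq, Polynomial.aeval_algHom_apply, hq, hidem]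
  by_cases hd : q.natDegree = 0
  · right
    rintro _ ⟨f, rfl⟩
    change φ f ∈ ⊥
    obtain ⟨p, hp⟩ := hmem f
    rw [Polynomial.eq_C_of_natDegree_eq_zero hd, Polynomial.aeval_C] at hq
    rw [Algebra.mem_bot, ← hidem, ← hp, ← Polynomial.aeval_algHom_apply, ← hq,
      Polynomial.aeval_algebraMap_apply_eq_algebraMap_eval]
    exact Set.mem_range_self _
  · left
    rw [← hq, Polynomial.eq_X_of_comp_self_eq_self hqq hd, Polynomial.aeval_X]

theorem exists_apply_eq_affine {φ ψ : A →ₐ[K] A} (hx : Transcendental K x)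
    (hφ : φ x ∈ Algebra.adjoin K {y}) (hψ : ψ y ∈ Algebra.adjoin K {x}) (hψφ : ψ (φ x) = x) :
    ∃ a b : K, a ≠ 0 ∧ φ x = algebraMap K A a * y + algebraMap K A b := by
  rw [Algebra.adjoin_singleton_eq_range_aeval] at hφ hψ
  obtain ⟨h, hh⟩ := (Polynomial.aeval y).mem_range.1 hφ
  obtain ⟨g, hg⟩ := (Polynomial.aeval x).mem_range.1 hψ
  have hhg : h.comp g = Polynomial.X := transcendental_iff_injective.1 hx <| by
    rw [Polynomial.aeval_comp, hg, Polynomial.aeval_algHom_apply, hh, hψφ, Polynomial.aeval_X]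
  have hd := Polynomial.natDegree_eq_one_of_comp_eq_X hhg
  refine ⟨h.coeff 1, h.coeff 0, ?_, ?_⟩
  · rw [← hd]
    exact Polynomial.leadingCoeff_ne_zero.2
      (Polynomial.ne_zero_of_natDegree_gt (n := 0) (by omega))
  · rw [← hh, Polynomial.eq_X_add_C_of_natDegree_le_one hd.le]
    simp

end AlgHom

namespace MvPolynomial

variable {σ K A : Type*} [Field K] [CommSemiring A] [Algebra K A]

theorem bijective_aeval_affine {a : σ → K} (ha : ∀ i, a i ≠ 0) (b : σ → K) :
    Function.Bijective (aeval fun i => C (a i) * X i + C (b i) : MvPolynomial σ K →ₐ[K] _) :=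
  (AlgEquiv.ofAlgHom (aeval fun i => C (a i) * X i + C (b i))
    (aeval fun i => C (a i)⁻¹ * (X i - C (b i)))
    (algHom_ext fun i => by simp [← mul_assoc, ← C_mul, ha i])
    (algHom_ext fun i => by simp [← mul_assoc, ← C_mul, ha i])).bijective

theorem bijective_aeval_affine_of_bijective {z : σ → A}
    (hz : Function.Bijective (aeval (R := K) z)) {a : σ → K} (ha : ∀ i, a i ≠ 0) (b : σ → K) :
    Function.Bijective
      (aeval (R := K) fun i => algebraMap K A (a i) * z i + algebraMap K A (b i)) := by
  have h : aeval (R := K) (fun i => algebraMap K A (a i) * z i + algebraMap K A (b i)) =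
      (aeval z).comp (aeval fun i => C (a i) * X i + C (b i)) := by
    rw [comp_aeval]
    simp
  rw [h, AlgHom.coe_comp]
  exact hz.comp (bijective_aeval_affine ha b)

end MvPolynomial

section Subbase

variable {K : Type} [Field K] {n : ℕ}
  {e : Fin n → Fin n → (MvPolynomial (Fin n) K →ₐ[K] MvPolynomial (Fin n) K)}

theorem zeroEnd_apply (f : MvPolynomial (Fin n) K) : zeroEnd K n f = C (constantCoeff f) :=
  aeval_zero' f

variable (hee : ∀ i j k l, (e i j).comp (e k l) = if j = k then e i l else zeroEnd K n)
include hee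

theorem apply_apply_of_comp_eq (i j k l : Fin n) (f : MvPolynomial (Fin n) K) :
    e i j (e k l f) = if j = k then e i l f else zeroEnd K n f := by
  rw [← AlgHom.comp_apply, hee]
  split_ifs <;> rfl

theorem diag_apply_eq_self_of_range_le_adjoin (hn : 2 ≤ n) (hne : ∀ i j, e i j ≠ zeroEnd K n)
    {i : Fin n} {x : MvPolynomial (Fin n) K} (hx : Transcendental K x)
    (hr : (e i i).range ≤ Algebra.adjoin K {x}) : e i i x = x := by
  obtain ⟨j, hji⟩ := Fintype.exists_ne_of_one_lt_card (by simp; omega) i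
  refine (AlgHom.apply_eq_self_or_range_le_bot hx (by simpa using hee i i i i) hr).resolve_right
    fun hbot => hne i i ?_
  rw [← AlgHom.comp_eq_self_of_range_le_bot (e j j) hbot, hee, if_neg hji]

end Subbase

/-- For every base collection `e'_{ij}` of endomorphisms of `K[x₁,…,xₙ]` there is a base
`z'₁,…,z'ₙ` of `K[x₁,…,xₙ]` in which the `e'_{ij}` are the Kronecker endomorphisms. -/
theorem stmt_13 (K : Type) [Field K] (n : ℕ) (hn : 2 ≤ n)
    (e : Fin n → Fin n → (MvPolynomial (Fin n) K →ₐ[K] MvPolynomial (Fin n) K))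
    (hne : ∀ i j, e i j ≠ zeroEnd K n)
    (hee : ∀ i j k l, (e i j).comp (e k l) = if j = k then e i l else zeroEnd K n)
    (hbase : ∃ z : Fin n → MvPolynomial (Fin n) K,
        Function.Bijective ⇑(MvPolynomial.aeval (R := K) z) ∧
        ∀ i, (e i i).range ≤ Algebra.adjoin K {z i}) :
    ∃ z' : Fin n → MvPolynomial (Fin n) K,
      Function.Bijective ⇑(MvPolynomial.aeval (R := K) z') ∧
      ∀ i j k, e i j (z' k) = if k = j then z' i else 0 := by
  obtain ⟨z, hz, hr⟩ := hbase
  have htr : ∀ i, Transcendental K (z i) :=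
    (algebraicIndependent_iff_injective_aeval.2 hz.1).transcendental
  have happ := apply_apply_of_comp_eq hee
  let i₀ : Fin n := ⟨0, by omega⟩
  have hfix : e i₀ i₀ (z i₀) = z i₀ :=
    diag_apply_eq_self_of_range_le_adjoin hee hn hne (htr i₀) (hr i₀)
  have hlin (k : Fin n) : ∃ a b : K, a ≠ 0 ∧
      e k i₀ (z i₀) = algebraMap K _ a * z k + algebraMap K _ b :=
    AlgHom.exists_apply_eq_affine (φ := e k i₀) (ψ := e i₀ k) (htr i₀)
      (hr k ((e k k).mem_range.2 ⟨_, by rw [happ, if_pos rfl]⟩))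
      (hr i₀ ((e i₀ i₀).mem_range.2 ⟨_, by rw [happ, if_pos rfl]⟩))
      (by rw [happ, if_pos rfl, hfix])
  choose a b ha hab using hlin
  set c := constantCoeff (z i₀)
  set u := z i₀ - C c
  have hu : zeroEnd K n u = 0 := by simp [zeroEnd_apply, u, c]
  refine ⟨fun k => e k i₀ u, ?_, fun i j k => ?_⟩
  · convert bijective_aeval_affine_of_bijective hz ha (fun k => b k - c) using 3
    funext k
    rw [map_sub, hab, ← algebraMap_eq, AlgHom.commutes, map_sub]
    ring
  · simp only [happ, hu, eq_comm (a := k)]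
end

section
/- Let K be a field, A = K[x₁,…,xₙ], Φ an automorphism of the monoid End A of K-algebra endomorphisms of A, and e_{ij} the Kronecker endomorphisms of A in the standard base. Then the following are equivalent: (i) Φ is quasi-inner, i.e., there exists a bijection s : A → A such that Φ(ν) = s ∘ ν ∘ s⁻¹ (as maps of sets) for every ν ∈ End A; (ii) there exist u₁,…,uₙ ∈ A forming a base of A such that, letting B denote the K-algebra automorphism of A with B(x_i) = u_i, one has Φ(e_{ij}) = B ∘ e_{ij} ∘ B⁻¹ for all i, j (equivalently, Φ(e_{ij})(u_k) = u_i if k = j and 0 if k ≠ j, i.e., the Φ(e_{ij}) are the Kronecker endomorphisms in the base u₁,…,uₙ). -/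
open MvPolynomial

/-- The Kronecker endomorphism `e_{ij}` of `K[x₁,…,xₙ]` in the standard base:
`x_j ↦ x_i` and `x_k ↦ 0` for `k ≠ j`. -/
noncomputable def kron (K : Type) [Field K] (n : ℕ) (i j : Fin n) :
    MvPolynomial (Fin n) K →ₐ[K] MvPolynomial (Fin n) K :=
  MvPolynomial.aeval fun k : Fin n =>
    if k = j then MvPolynomial.X i else (0 : MvPolynomial (Fin n) K)

/-!
(i) ⇒ (ii): translating `s` by `s⁻¹ 0`, which every endomorphism fixes, we may assume `s 0 = 0`;
then `u k := s (X k)` works, since `Φ (e_{ij})` acts on the `u k` as `e_{ij}` on the `X k`, and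
`aeval u` has the two-sided inverse `Φ (aeval (s⁻¹ ∘ X))`.

(ii) ⇒ (i): conjugating `Φ` by the automorphism `X k ↦ u k` gives an automorphism `Ψ` fixing every
`e_{ij}`. The endomorphisms `c_p` sending every variable to `p` are singled out by a monoid
condition on `e_{ij}`, so `Ψ (c_p) = c_{t p}` for a bijection `t`, and applying `Ψ` to
`ν * c_q = c_{ν q}` shows that `Ψ` is conjugation by `t`.
-/

section IsConjBy

variable {R A B : Type*} [CommSemiring R] [Semiring A] [Semiring B] [Algebra R A] [Algebra R B]

def IsConjBy (Φ : (A →ₐ[R] A) ≃* (B →ₐ[R] B)) (s : A ≃ B) : Prop :=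
  ∀ ν p, Φ ν (s p) = s (ν p)

variable {Φ : (A →ₐ[R] A) ≃* (B →ₐ[R] B)} {s : A ≃ B}

theorem isConjBy_iff : IsConjBy Φ s ↔ ∀ ν p, Φ ν p = s (ν (s.symm p)) :=
  ⟨fun h ν p => by rw [← h, s.apply_symm_apply], fun h ν p => by rw [h, s.symm_apply_apply]⟩

theorem IsConjBy.symm (h : IsConjBy Φ s) : IsConjBy Φ.symm s.symm := fun ν p => by
  rw [Equiv.eq_symm_apply, ← h, Φ.apply_symm_apply, s.apply_symm_apply]

theorem IsConjBy.map_symm_zero (h : IsConjBy Φ s) (ν : A →ₐ[R] A) : ν (s.symm 0) = s.symm 0 := by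
  rw [Equiv.eq_symm_apply, ← h, s.apply_symm_apply, map_zero]

def AlgEquiv.endCongr (e : A ≃ₐ[R] B) : (A →ₐ[R] A) ≃* (B →ₐ[R] B) :=
  { e.arrowCongr e with map_mul' := fun f g => by ext; simp [AlgHom.mul_apply] }

theorem AlgEquiv.endCongr_apply_apply (e : A ≃ₐ[R] B) (f : A →ₐ[R] A) (b : B) :
    e.endCongr f b = e (f (e.symm b)) :=
  rfl

theorem IsConjBy.of_trans_endCongr {Φ : (A →ₐ[R] A) ≃* (A →ₐ[R] A)} (e : A ≃ₐ[R] B)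
    (h : IsConjBy (Φ.trans e.endCongr) s) : IsConjBy Φ (s.trans e.symm.toEquiv) := fun ν p => by
  simp only [Equiv.trans_apply, AlgEquiv.toEquiv_eq_coe, EquivLike.coe_coe, ← h ν p,
    MulEquiv.trans_apply, AlgEquiv.endCongr_apply_apply, AlgEquiv.symm_apply_apply]

end IsConjBy

theorem IsConjBy.exists_map_zero {R A B : Type*} [CommSemiring R] [Ring A] [Semiring B]
    [Algebra R A] [Algebra R B] {Φ : (A →ₐ[R] A) ≃* (B →ₐ[R] B)} {s : A ≃ B}
    (h : IsConjBy Φ s) : ∃ σ : A ≃ B, IsConjBy Φ σ ∧ σ 0 = 0 := by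
  refine ⟨(Equiv.addRight (s.symm 0)).trans s, fun ν p => ?_, by simp⟩
  simp only [Equiv.trans_apply, Equiv.coe_addRight, h ν, map_add, h.map_symm_zero]

section MvPolynomial

variable {R ι : Type*} [CommSemiring R]
  {Φ : (MvPolynomial ι R →ₐ[R] MvPolynomial ι R) ≃* (MvPolynomial ι R →ₐ[R] MvPolynomial ι R)}
  {s : MvPolynomial ι R ≃ MvPolynomial ι R}

theorem IsConjBy.aeval_mul_aeval_eq_one (h : IsConjBy Φ s) :
    Φ (aeval fun i => s.symm (X i)) * aeval (fun i => s (X i)) = 1 :=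
  algHom_ext fun i => by simp [AlgHom.mul_apply, h _ _]

theorem IsConjBy.bijective_aeval (h : IsConjBy Φ s) :
    Function.Bijective (aeval (R := R) fun i => s (X i)) := by
  have hleft := h.aeval_mul_aeval_eq_one
  have hright := congrArg Φ h.symm.aeval_mul_aeval_eq_one
  simp only [Equiv.symm_symm, map_mul, MulEquiv.apply_symm_apply, map_one] at hright
  refine Function.bijective_iff_has_inverse.2
    ⟨Φ (aeval fun i => s.symm (X i)), fun p => ?_, fun p => ?_⟩
  · simpa using DFunLike.congr_fun hleft p
  · simpa using DFunLike.congr_fun hright p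

noncomputable def aevalConst (p : MvPolynomial ι R) : MvPolynomial ι R →ₐ[R] MvPolynomial ι R :=
  aeval fun _ => p

@[simp]
theorem aevalConst_X (p : MvPolynomial ι R) (i : ι) : aevalConst p (X i) = p :=
  aeval_X _ _

theorem mul_aevalConst (ν : MvPolynomial ι R →ₐ[R] MvPolynomial ι R) (p : MvPolynomial ι R) :
    ν * aevalConst p = aevalConst (ν p) :=
  algHom_ext fun _ => by simp [AlgHom.mul_apply]

end MvPolynomial

section Kronecker

variable {K : Type} [Field K] {n : ℕ}

@[simp]
theorem kron_X (i j k : Fin n) : kron K n i j (X k) = if k = j then X i else 0 := by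
  simp [kron]

theorem IsConjBy.map_kron_apply
    {Φ : (MvPolynomial (Fin n) K →ₐ[K] MvPolynomial (Fin n) K) ≃*
    (MvPolynomial (Fin n) K →ₐ[K] MvPolynomial (Fin n) K)}
    {s : MvPolynomial (Fin n) K ≃ MvPolynomial (Fin n) K} (h : IsConjBy Φ s) (h0 : s 0 = 0)
    (i j k : Fin n) : Φ (kron K n i j) (s (X k)) = if k = j then s (X i) else 0 := by
  rw [h, kron_X]
  split_ifs <;> simp [h0]

theorem aevalConst_mul_kron (p : MvPolynomial (Fin n) K) (i k : Fin n) :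
    aevalConst p * kron K n k i = aevalConst p * kron K n i i :=
  algHom_ext fun m => by by_cases hm : m = i <;> simp [AlgHom.mul_apply, hm]

theorem eq_aevalConst_of_mul_kron {φ : MvPolynomial (Fin n) K →ₐ[K] MvPolynomial (Fin n) K}
    {i : Fin n} (h : ∀ k, φ * kron K n k i = φ * kron K n i i) : φ = aevalConst (φ (X i)) :=
  algHom_ext fun k => by simpa [AlgHom.mul_apply] using DFunLike.congr_fun (h k) (X i)

variable {Ψ : (MvPolynomial (Fin n) K →ₐ[K] MvPolynomial (Fin n) K) ≃*
    (MvPolynomial (Fin n) K →ₐ[K] MvPolynomial (Fin n) K)}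

/-- The `aevalConst p` are exactly the `φ` with `φ e_{ki} = φ e_{ii}` for all `k`, a condition that
`Ψ` preserves. -/
theorem map_aevalConst_of_map_kron (hΨ : ∀ i j, Ψ (kron K n i j) = kron K n i j)
    (i : Fin n) (p : MvPolynomial (Fin n) K) :
    Ψ (aevalConst p) = aevalConst (Ψ (aevalConst p) (X i)) :=
  eq_aevalConst_of_mul_kron fun k => by
    rw [← hΨ k i, ← hΨ i i, ← map_mul, ← map_mul, aevalConst_mul_kron]

theorem map_kron_symm_of_map_kron (hΨ : ∀ i j, Ψ (kron K n i j) = kron K n i j) (i j : Fin n) :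
    Ψ.symm (kron K n i j) = kron K n i j := by
  rw [MulEquiv.symm_apply_eq, hΨ]

noncomputable def equivOfMapKron (hΨ : ∀ i j, Ψ (kron K n i j) = kron K n i j) (i : Fin n) :
    MvPolynomial (Fin n) K ≃ MvPolynomial (Fin n) K where
  toFun p := Ψ (aevalConst p) (X i)
  invFun p := Ψ.symm (aevalConst p) (X i)
  left_inv p := by
    dsimp only
    rw [← map_aevalConst_of_map_kron hΨ, MulEquiv.symm_apply_apply, aevalConst_X]
  right_inv p := by
    dsimp only
    rw [← map_aevalConst_of_map_kron (map_kron_symm_of_map_kron hΨ), MulEquiv.apply_symm_apply,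
      aevalConst_X]

theorem isConjBy_equivOfMapKron (hΨ : ∀ i j, Ψ (kron K n i j) = kron K n i j) (i : Fin n) :
    IsConjBy Ψ (equivOfMapKron hΨ i) := fun ν q => by
  show Ψ ν (Ψ (aevalConst q) (X i)) = Ψ (aevalConst (ν q)) (X i)
  have key : Ψ ν * Ψ (aevalConst q) = Ψ (aevalConst (ν q)) := by
    rw [← map_mul, mul_aevalConst]
  rw [map_aevalConst_of_map_kron hΨ i q, map_aevalConst_of_map_kron hΨ i (ν q),
    mul_aevalConst] at key
  simpa using DFunLike.congr_fun key (X i)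

theorem exists_isConjBy_of_map_kron (hΨ : ∀ i j, Ψ (kron K n i j) = kron K n i j) :
    ∃ t, IsConjBy Ψ t := by
  rcases isEmpty_or_nonempty (Fin n) with hn | ⟨⟨i⟩⟩
  · have hΨ_eq : ∀ ν, Ψ ν = ν := fun ν => algHom_ext isEmptyElim
    exact ⟨Equiv.refl _, fun ν p => by rw [hΨ_eq]; rfl⟩
  · exact ⟨_, isConjBy_equivOfMapKron hΨ i⟩

end Kronecker

/-- An automorphism `Φ` of `End K[x₁,…,xₙ]` is quasi-inner if and only if the `Φ(e_{ij})`
are the Kronecker endomorphisms in some base `u₁,…,uₙ` of `K[x₁,…,xₙ]`. -/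
theorem stmt_15 (K : Type) [Field K] (n : ℕ)
    (Φ : (MvPolynomial (Fin n) K →ₐ[K] MvPolynomial (Fin n) K) ≃*
         (MvPolynomial (Fin n) K →ₐ[K] MvPolynomial (Fin n) K)) :
    (∃ s : MvPolynomial (Fin n) K ≃ MvPolynomial (Fin n) K,
        ∀ (ν : MvPolynomial (Fin n) K →ₐ[K] MvPolynomial (Fin n) K)
          (p : MvPolynomial (Fin n) K), Φ ν p = s (ν (s.symm p))) ↔
    (∃ u : Fin n → MvPolynomial (Fin n) K,
        Function.Bijective ⇑(MvPolynomial.aeval (R := K) u) ∧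
        ∀ i j k : Fin n, Φ (kron K n i j) (u k) = if k = j then u i else 0) := by
  constructor
  · rintro ⟨s, hs⟩
    obtain ⟨σ, hσ, hσ0⟩ := (isConjBy_iff.2 hs).exists_map_zero
    exact ⟨fun k => σ (X k), hσ.bijective_aeval, hσ.map_kron_apply hσ0⟩
  · rintro ⟨u, hu, hkron⟩
    set E := AlgEquiv.ofBijective (aeval u) hu
    have hE : ∀ k, E (X k) = u k := aeval_X u
    have hΨ : ∀ i j, (Φ.trans E.symm.endCongr) (kron K n i j) = kron K n i j := fun i j =>
      algHom_ext fun k => by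
        rw [MulEquiv.trans_apply, AlgEquiv.endCongr_apply_apply, AlgEquiv.symm_symm, hE, hkron,
          kron_X]
        split_ifs <;> simp [← hE]
    obtain ⟨t, ht⟩ := exists_isConjBy_of_map_kron hΨ
    exact ⟨_, isConjBy_iff.1 (ht.of_trans_endCongr E.symm)⟩
end
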